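/- Let H : [0,∞) → ℝ be Lebesgue integrable, nonnegative, nonzero in L^1((0,∞)), with t ↦ (H(t)-H(0))/t bounded near 0. Define ψ_H(s) = ∫_0^∞ ( H(0) e^{-t}/t - H(t) e^{-st}/(1-e^{-t}) ) dt. Then for every integer n ≥ 0, the quadratic form q_n^H(x_0,...,x_n) = ∑_{0≤i,j≤n} x_i x_j ψ_H(|i-j|) is negative definite on the subspace of ℝ^{n+1} where H(0)·∑_i x_i = 0. -/

import Mathlib

/-!
With `r = e^{-t}`, the integrand of `∑ x_i x_j ψ_H(|i - j|)` is
`H(0) (∑ x_i)² e^{-t}/t - H(t)/(1 - e^{-t}) · ∑ x_i x_j r^{|i - j|}`.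
The first term vanishes when `H(0) ∑ x_i = 0`, and the second is the quadratic form of the
Kac–Murdock–Szegő matrix `(r^{|i - j|})`, which is positive definite for `0 < r < 1`.
So `q_n^H(x)` is minus the integral of a nonnegative function that is positive wherever `H` is,
and `H` is not a.e. zero.
-/

open MeasureTheory Set Finset

/-- The real-valued function `ψ_H`. -/
noncomputable def psiH (H : ℝ → ℝ) (s : ℝ) : ℝ :=
  ∫ t in Ioi (0 : ℝ),
    (H 0 * Real.exp (-t) / t - H t * Real.exp (-(s * t)) / (1 - Real.exp (-t)))

/-- The quadratic form `q_n^H`. -/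
noncomputable def qH (H : ℝ → ℝ) (n : ℕ) (x : Fin (n + 1) → ℝ) : ℝ :=
  ∑ i, ∑ j, x i * x j * psiH H |(i.1 : ℝ) - (j.1 : ℝ)|

open Real

section KacMurdockSzego

/-- The quadratic form of the Kac–Murdock–Szegő matrix `(r ^ |i - j|)`. -/
noncomputable def kmsForm {n : ℕ} (r : ℝ) (x : Fin n → ℝ) : ℝ :=
  ∑ i, ∑ j, x i * x j * r ^ (((i : ℕ) : ℤ) - (j : ℕ)).natAbs

variable {r : ℝ}

lemma sum_mul_pow_fin_succ {n : ℕ} (x : Fin (n + 1) → ℝ) :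
    ∑ i, x i * r ^ (i : ℕ) = x 0 + r * ∑ i, Fin.tail x i * r ^ (i : ℕ) := by
  simp only [Fin.sum_univ_succ, Fin.val_zero, pow_zero, mul_one, Fin.val_succ, pow_succ,
    Finset.mul_sum, Fin.tail]
  congr 1
  exact Finset.sum_congr rfl fun i _ => by ring

lemma kmsForm_succ {n : ℕ} (x : Fin (n + 1) → ℝ) :
    kmsForm r x = kmsForm r (Fin.tail x) + x 0 ^ 2
      + 2 * r * x 0 * ∑ i, Fin.tail x i * r ^ (i : ℕ) := by
  have hsucc (i j : Fin n) : ((((i.succ : ℕ) : ℤ) - (j.succ : ℕ)).natAbs)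
      = (((i : ℕ) : ℤ) - (j : ℕ)).natAbs := by simp only [Fin.val_succ]; omega
  have hleft (i : Fin n) : ((((i.succ : ℕ) : ℤ) - ((0 : Fin (n + 1)) : ℕ)).natAbs) = i + 1 := by
    simp only [Fin.val_succ, Fin.val_zero]; omega
  have hright (i : Fin n) : (((((0 : Fin (n + 1)) : ℕ) : ℤ) - (i.succ : ℕ)).natAbs) = i + 1 := by
    simp only [Fin.val_succ, Fin.val_zero]; omega
  have hcross : 2 * r * x 0 * ∑ i : Fin n, x i.succ * r ^ (i : ℕ)
      = ∑ i : Fin n, x i.succ * x 0 * r ^ ((i : ℕ) + 1)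
        + ∑ i : Fin n, x 0 * x i.succ * r ^ ((i : ℕ) + 1) := by
    rw [← Finset.sum_add_distrib, Finset.mul_sum]
    exact Finset.sum_congr rfl fun i _ => by ring
  simp only [kmsForm, Fin.sum_univ_succ, hsucc, hleft, hright, Fin.tail, Finset.sum_add_distrib,
    hcross, sub_self, Int.natAbs_zero, pow_zero]
  ring

/- With `T x = ∑ x_i r^i`, `kmsForm_succ` and `sum_mul_pow_fin_succ` give
`kmsForm r x - (T x)² = kmsForm r x' - r² (T x')²` for the tail `x'`, so the induction closes
as soon as `r² ≤ 1`. -/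
lemma sq_sum_mul_pow_le_kmsForm (hr : r ^ 2 ≤ 1) {n : ℕ} (x : Fin n → ℝ) :
    (∑ i, x i * r ^ (i : ℕ)) ^ 2 ≤ kmsForm r x := by
  induction n with
  | zero => simp [kmsForm]
  | succ n ih =>
    rw [kmsForm_succ, sum_mul_pow_fin_succ]
    nlinarith [ih (Fin.tail x), sq_nonneg (∑ i, Fin.tail x i * r ^ (i : ℕ))]

lemma kmsForm_nonneg (hr : r ^ 2 ≤ 1) {n : ℕ} (x : Fin n → ℝ) : 0 ≤ kmsForm r x :=
  (sq_nonneg _).trans (sq_sum_mul_pow_le_kmsForm hr x)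

lemma eq_zero_of_kmsForm_eq_zero (hr : r ^ 2 < 1) {n : ℕ} {x : Fin n → ℝ}
    (hx : kmsForm r x = 0) : x = 0 := by
  induction n with
  | zero => exact Subsingleton.elim _ _
  | succ n ih =>
    rw [kmsForm_succ] at hx
    set T := ∑ i, Fin.tail x i * r ^ (i : ℕ)
    have hT : T ^ 2 ≤ kmsForm r (Fin.tail x) := sq_sum_mul_pow_le_kmsForm hr.le _
    have htail : kmsForm r (Fin.tail x) = 0 := by
      nlinarith [sq_nonneg (x 0 + r * T), sq_nonneg r, kmsForm_nonneg hr.le (Fin.tail x)]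
    have hhead : x 0 = 0 := by
      have : T = 0 := by nlinarith
      rw [this, htail] at hx
      nlinarith
    rw [← Fin.cons_self_tail x, hhead, ih htail]
    exact Matrix.cons_zero_zero

lemma kmsForm_pos (hr : r ^ 2 < 1) {n : ℕ} {x : Fin n → ℝ} (hx : x ≠ 0) : 0 < kmsForm r x :=
  (kmsForm_nonneg hr.le x).lt_of_ne fun h => hx (eq_zero_of_kmsForm_eq_zero hr h.symm)

end KacMurdockSzego

lemma mul_exp_neg_le_one_sub_exp_neg (t : ℝ) : t * exp (-t) ≤ 1 - exp (-t) := by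
  have h : exp t * exp (-t) = 1 := by rw [← exp_add, add_neg_cancel, exp_zero]
  nlinarith [add_one_le_exp t, exp_pos (-t)]

lemma one_sub_exp_neg_le (t : ℝ) : 1 - exp (-t) ≤ t := by
  linarith [one_sub_le_exp_neg t]

lemma one_sub_exp_neg_pos {t : ℝ} (ht : 0 < t) : 0 < 1 - exp (-t) := by
  linarith [exp_lt_one_iff.2 (neg_lt_zero.2 ht)]

lemma div_three_le_one_sub_exp_neg {t : ℝ} (ht : 0 ≤ t) (ht1 : t ≤ 1) :
    t / 3 ≤ 1 - exp (-t) := by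
  have : exp (-1) ≤ exp (-t) := exp_le_exp.2 (by linarith)
  nlinarith [mul_exp_neg_le_one_sub_exp_neg t, exp_neg_one_gt_d9]

lemma abs_exp_neg_div_sub_inv_le {t : ℝ} (ht : 0 < t) :
    |exp (-t) / t - (1 - exp (-t))⁻¹| ≤ 2 := by
  have hD := one_sub_exp_neg_pos ht
  have hr := exp_pos (-t)
  have hlow := mul_exp_neg_le_one_sub_exp_neg t
  have hup := one_sub_exp_neg_le t
  have : exp (-t) / t - (1 - exp (-t))⁻¹
      = (exp (-t) * (1 - exp (-t)) - t) / (t * (1 - exp (-t))) := by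
    field_simp
  rw [this, abs_div, abs_of_pos (mul_pos ht hD), div_le_iff₀ (mul_pos ht hD), abs_le]
  constructor <;> nlinarith [mul_le_mul_of_nonneg_left hlow hr.le]

section Integrability

noncomputable def psiIntegrand (H : ℝ → ℝ) (s t : ℝ) : ℝ :=
  H 0 * exp (-t) / t - H t * exp (-(s * t)) / (1 - exp (-t))

variable {H : ℝ → ℝ} {s : ℝ}

lemma aestronglyMeasurable_psiIntegrand {μ : Measure ℝ} (hH : AEStronglyMeasurable H μ) :
    AEStronglyMeasurable (psiIntegrand H s) μ := by
  have hm : Measurable fun t : ℝ => H 0 * exp (-t) / t := by fun_prop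
  have hm' : Measurable fun t : ℝ => exp (-(s * t)) / (1 - exp (-t)) := by fun_prop
  refine hm.aestronglyMeasurable.sub ((hH.mul hm'.aestronglyMeasurable).congr ?_)
  filter_upwards with t using mul_div_assoc' _ _ _

-- The `1/t` singularities of the two terms cancel against each other.
lemma abs_psiIntegrand_le {C t : ℝ} (hs : 0 ≤ s) (ht : t ∈ Ioc (0 : ℝ) 1)
    (hH : |H t - H 0| ≤ C * t) :
    |psiIntegrand H s t| ≤ (2 + 3 * s) * |H 0| + 3 * C := by
  obtain ⟨ht0, ht1⟩ := ht
  have hsplit : psiIntegrand H s t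
      = H 0 * (exp (-t) / t - (1 - exp (-t))⁻¹) + H 0 * (1 - exp (-(s * t))) / (1 - exp (-t))
        + (H 0 - H t) * exp (-(s * t)) / (1 - exp (-t)) := by
    unfold psiIntegrand
    ring
  set E := exp (-(s * t))
  set D := 1 - exp (-t)
  have hD : t / 3 ≤ D := div_three_le_one_sub_exp_neg ht0.le ht1
  have hD0 : 0 < D := one_sub_exp_neg_pos ht0
  have hE0 : 0 < E := exp_pos _
  have hE1 : E ≤ 1 := exp_le_one_iff.2 (by nlinarith)
  have hC : 0 ≤ C := by nlinarith [abs_nonneg (H t - H 0)]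
  have h1 : |H 0 * (exp (-t) / t - D⁻¹)| ≤ 2 * |H 0| := by
    rw [abs_mul, mul_comm]
    exact mul_le_mul_of_nonneg_right (abs_exp_neg_div_sub_inv_le ht0) (abs_nonneg _)
  have h2 : |H 0 * (1 - E) / D| ≤ 3 * s * |H 0| := by
    rw [abs_div, abs_mul, abs_of_pos hD0, div_le_iff₀ hD0, abs_of_nonneg (sub_nonneg.2 hE1)]
    nlinarith [one_sub_exp_neg_le (s * t), abs_nonneg (H 0), mul_nonneg hs (abs_nonneg (H 0))]
  have h3 : |(H 0 - H t) * E / D| ≤ 3 * C := by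
    rw [abs_div, abs_mul, abs_of_pos hD0, abs_of_pos hE0, abs_sub_comm, div_le_iff₀ hD0]
    nlinarith [abs_nonneg (H t - H 0)]
  rw [hsplit]
  linarith [abs_add_three (H 0 * (exp (-t) / t - D⁻¹)) (H 0 * (1 - E) / D) ((H 0 - H t) * E / D)]

lemma abs_psiIntegrand_le_of_lt {a t : ℝ} (hs : 0 ≤ s) (ha : 0 < a) (ht : a < t) :
    |psiIntegrand H s t| ≤ |H 0| / a * exp (-t) + |H t| / (1 - exp (-a)) := by
  have ht0 : 0 < t := ha.trans ht
  have hDa := one_sub_exp_neg_pos ha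
  have hDt : 1 - exp (-a) ≤ 1 - exp (-t) := by linarith [exp_le_exp.2 (neg_le_neg ht.le)]
  have hE1 : exp (-(s * t)) ≤ 1 := exp_le_one_iff.2 (by nlinarith)
  unfold psiIntegrand
  refine (abs_sub _ _).trans (add_le_add ?_ ?_)
  · calc |H 0 * exp (-t) / t| = |H 0| * exp (-t) / t := by
          rw [abs_div, abs_mul, abs_of_pos (exp_pos _), abs_of_pos ht0]
      _ ≤ |H 0| * exp (-t) / a := by gcongr
      _ = |H 0| / a * exp (-t) := by ring
  · rw [abs_div, abs_mul, abs_of_pos (exp_pos _), abs_of_pos (hDa.trans_le hDt)]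
    exact div_le_div₀ (abs_nonneg _) (mul_le_of_le_one_right (abs_nonneg _) hE1) hDa hDt

lemma integrableOn_Ioc_psiIntegrand {a C : ℝ}
    (hH : AEStronglyMeasurable H (volume.restrict (Ioc 0 a))) (hs : 0 ≤ s) (ha : a ≤ 1)
    (hC : ∀ t ∈ Ioc 0 a, |H t - H 0| ≤ C * t) :
    IntegrableOn (psiIntegrand H s) (Ioc 0 a) := by
  refine Integrable.mono'
    (integrableOn_const measure_Ioc_lt_top.ne (C := (2 + 3 * s) * |H 0| + 3 * C))
    (aestronglyMeasurable_psiIntegrand hH) ?_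
  filter_upwards [ae_restrict_mem measurableSet_Ioc] with t ht
  exact abs_psiIntegrand_le hs ⟨ht.1, ht.2.trans ha⟩ (hC t ht)

lemma integrableOn_Ioi_psiIntegrand {a : ℝ} (hH : IntegrableOn H (Ioi a)) (hs : 0 ≤ s)
    (ha : 0 < a) : IntegrableOn (psiIntegrand H s) (Ioi a) := by
  refine Integrable.mono'
    (((integrableOn_exp_neg_Ioi a).const_mul (|H 0| / a)).add (hH.norm.div_const (1 - exp (-a))))
    (aestronglyMeasurable_psiIntegrand hH.1) ?_
  filter_upwards [ae_restrict_mem measurableSet_Ioi] with t ht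
  exact abs_psiIntegrand_le_of_lt hs ha ht

lemma integrableOn_psiIntegrand (hInt : IntegrableOn H (Ici 0))
    (hbd : ∃ ε > (0 : ℝ), ∃ C : ℝ, ∀ t ∈ Ioo (0 : ℝ) ε, |(H t - H 0) / t| ≤ C) (hs : 0 ≤ s) :
    IntegrableOn (psiIntegrand H s) (Ioi 0) := by
  obtain ⟨ε, hε, C, hC⟩ := hbd
  have ha : 0 < min (ε / 2) 1 := lt_min (half_pos hε) one_pos
  rw [← Ioc_union_Ioi_eq_Ioi ha.le]
  refine .union (integrableOn_Ioc_psiIntegrand (C := C) (hInt.mono_set ?_).1 hs (min_le_right _ _)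
    fun t ht => ?_) (integrableOn_Ioi_psiIntegrand (hInt.mono_set ?_) hs ha)
  · exact Ioc_subset_Ioi_self.trans Ioi_subset_Ici_self
  · have := hC t ⟨ht.1, ht.2.trans_lt ((min_le_left _ _).trans_lt (half_lt_self hε))⟩
    rwa [abs_div, abs_of_pos ht.1, div_le_iff₀ ht.1] at this
  · exact (Ioi_subset_Ioi ha.le).trans Ioi_subset_Ici_self

end Integrability

lemma setIntegral_mul_pos {α : Type*} [MeasurableSpace α] {μ : Measure α} {s : Set α}
    (hs : MeasurableSet s) {f w : α → ℝ} (hf : ∀ t ∈ s, 0 ≤ f t) (hw : ∀ t ∈ s, 0 < w t)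
    (hint : IntegrableOn (fun t => f t * w t) s μ) (hne : ¬ ∀ᵐ t ∂μ.restrict s, f t = 0) :
    0 < ∫ t in s, f t * w t ∂μ := by
  have hsupp : Function.support (fun t => f t * w t) ∩ s = {t | ¬ f t = 0} ∩ s := by
    ext t
    simp only [mem_inter_iff, Function.mem_support, Set.mem_ofPred_eq, mul_ne_zero_iff]
    exact ⟨fun h => ⟨h.1.1, h.2⟩, fun h => ⟨⟨h.1, (hw t h.2).ne'⟩, h.2⟩⟩
  rw [setIntegral_pos_iff_support_of_nonneg_ae _ hint, hsupp, ← Measure.restrict_apply' hs,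
    pos_iff_ne_zero]
  · exact mt ae_iff.2 hne
  · filter_upwards [ae_restrict_mem hs] with t ht using mul_nonneg (hf t ht) (hw t ht).le

lemma exp_neg_abs_sub_mul_eq_pow (i j : ℕ) (t : ℝ) :
    exp (-(|(i : ℝ) - j| * t)) = exp (-t) ^ ((i : ℤ) - j).natAbs := by
  rw [← exp_nat_mul, Nat.cast_natAbs, Int.cast_abs]
  push_cast
  ring_nf

lemma sum_mul_psiIntegrand {n : ℕ} (H : ℝ → ℝ) (x : Fin n → ℝ) (t : ℝ) :
    ∑ i, ∑ j, x i * x j * psiIntegrand H |(i.1 : ℝ) - (j.1 : ℝ)| t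
      = (∑ i, x i) * (H 0 * ∑ i, x i) * (exp (-t) / t)
        - H t * (kmsForm (exp (-t)) x / (1 - exp (-t))) := by
  have hterm (i j : Fin n) : x i * x j * psiIntegrand H |(i.1 : ℝ) - (j.1 : ℝ)| t
      = x i * x j * (H 0 * (exp (-t) / t))
        - H t / (1 - exp (-t)) * (x i * x j * exp (-t) ^ (((i : ℕ) : ℤ) - (j : ℕ)).natAbs) := by
    rw [psiIntegrand, exp_neg_abs_sub_mul_eq_pow]
    ring
  simp only [hterm, Finset.sum_sub_distrib, ← Finset.mul_sum, ← Finset.sum_mul, kmsForm]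
  ring

lemma integrableOn_sum_mul_psiIntegrand {H : ℝ → ℝ}
    (hint : ∀ s, 0 ≤ s → IntegrableOn (psiIntegrand H s) (Ioi 0)) {n : ℕ} (x : Fin n → ℝ) :
    IntegrableOn (fun t => ∑ i, ∑ j, x i * x j * psiIntegrand H |(i.1 : ℝ) - (j.1 : ℝ)| t)
      (Ioi 0) :=
  integrable_finsetSum _ fun _ _ => integrable_finsetSum _ fun _ _ =>
    (hint _ (abs_nonneg _)).const_mul _

lemma qH_eq_integral {H : ℝ → ℝ}
    (hint : ∀ s, 0 ≤ s → IntegrableOn (psiIntegrand H s) (Ioi 0)) {n : ℕ} (x : Fin (n + 1) → ℝ) :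
    qH H n x = ∫ t in Ioi 0, ∑ i, ∑ j, x i * x j * psiIntegrand H |(i.1 : ℝ) - (j.1 : ℝ)| t := by
  rw [integral_finsetSum _ fun _ _ => integrable_finsetSum _ fun _ _ =>
    (hint _ (abs_nonneg _)).const_mul _]
  refine Finset.sum_congr rfl fun i _ => ?_
  rw [integral_finsetSum _ fun _ _ => (hint _ (abs_nonneg _)).const_mul _]
  refine Finset.sum_congr rfl fun j _ => ?_
  rw [integral_const_mul]
  rfl

theorem stmt_6 (H : ℝ → ℝ)
    (hInt : IntegrableOn H (Ici 0))
    (hpos : ∀ t, 0 ≤ t → 0 ≤ H t)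
    (hne : ¬ (∀ᵐ t ∂(volume.restrict (Ioi (0 : ℝ))), H t = 0))
    (hbd : ∃ ε > (0 : ℝ), ∃ C : ℝ, ∀ t ∈ Ioo (0 : ℝ) ε, |(H t - H 0) / t| ≤ C)
    (n : ℕ) (x : Fin (n + 1) → ℝ)
    (hx : H 0 * ∑ i, x i = 0) (hx0 : x ≠ 0) :
    qH H n x < 0 := by
  have hint (s : ℝ) (hs : 0 ≤ s) := integrableOn_psiIntegrand hInt hbd hs
  set w : ℝ → ℝ := fun t => kmsForm (exp (-t)) x / (1 - exp (-t))
  have hsum (t : ℝ) : ∑ i, ∑ j, x i * x j * psiIntegrand H |(i.1 : ℝ) - (j.1 : ℝ)| t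
      = -(H t * w t) := by
    rw [sum_mul_psiIntegrand, hx]
    ring
  have hw (t : ℝ) (ht : 0 < t) : 0 < w t :=
    div_pos (kmsForm_pos (pow_lt_one₀ (exp_pos _).le (exp_lt_one_iff.2 (neg_neg_of_pos ht))
      two_ne_zero) hx0) (one_sub_exp_neg_pos ht)
  have hHw : IntegrableOn (fun t => H t * w t) (Ioi 0) := by
    simpa [hsum] using (integrableOn_sum_mul_psiIntegrand hint x).neg
  rw [qH_eq_integral hint, funext hsum, integral_neg, neg_lt_zero]
  exact setIntegral_mul_pos measurableSet_Ioi (fun t ht => hpos t (le_of_lt ht)) hw hHw hne
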